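/- Let f : [a,b] → ℝ be monotone non-increasing and let g(s) := limsup_{t→s}(f(t)−f(s))/(t−s) (the upper derivative). Then g is measurable and g(s) ≤ 0 for all s, hence g is integrable as an extended-real-valued non-positive function, and ∫_a^b g(s) ds ≥ f(b) − f(a). -/

import Mathlib

/-!
Extend `f` by constants outside `[a, b]` to an antitone `F : ℝ → ℝ`; this does not change the
upper derivative. For measurability, note that off the countable set `T` formed by the rationals,
`a`, `b` and the discontinuities of `F`, every point of `[a, b]` is an interior point at which the
slope `t ↦ (F t - F s) / (t - s)` is continuous; hence the supremum of the slopes over a punctured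
ball is already the supremum over `T`, and the upper derivative is a countable infimum of countable
suprema of measurable functions. For the integral bound, wherever `F` is differentiable, which is
almost everywhere by Lebesgue's theorem, the upper derivative is `F'`, and `∫_a^b F' ≥ F b - F a`
for antitone `F`.
-/

open Filter Set

/-- The canonical map `EReal → ℝ≥0∞`, sending `⊤` to `⊤` and everything
nonpositive to `0`. -/
noncomputable def erealToENNReal (x : EReal) : ENNReal :=
  if x = ⊤ then ⊤ else ENNReal.ofReal x.toReal

noncomputable def upperDeriv (a b : ℝ) (f : ℝ → ℝ) (s : ℝ) : EReal :=
  Filter.limsup (fun t => ((f t - f s) / (t - s) : EReal))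
    (nhdsWithin s (Set.Icc a b \ {s}))

open MeasureTheory Topology Metric

lemma erealToENNReal_eq_toENNReal : erealToENNReal = EReal.toENNReal := rfl

variable {a b : ℝ} {f : ℝ → ℝ}

lemma upperDeriv_eq_limsup_slope (s : ℝ) :
    upperDeriv a b f s = limsup (fun t => (slope f s t : EReal)) (𝓝[Icc a b \ {s}] s) := by
  simp only [upperDeriv, slope_def_field, EReal.coe_div, EReal.coe_sub]

lemma upperDeriv_congr {g : ℝ → ℝ} (h : EqOn f g (Icc a b)) :
    upperDeriv a b f = upperDeriv a b g := by
  ext s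
  by_cases hs : s ∈ Icc a b
  · refine limsup_congr ?_
    filter_upwards [eventually_mem_nhdsWithin] with t ht
    rw [h ht.1, h hs]
  · have : 𝓝[Icc a b \ {s}] s = ⊥ :=
      notMem_closure_iff_nhdsWithin_eq_bot.1 fun hcl =>
        hs (closure_minimal sdiff_subset isClosed_Icc hcl)
    simp only [upperDeriv, this, limsup_bot]

lemma upperDeriv_nonpos (hf : AntitoneOn f (Icc a b)) {s : ℝ} (hs : s ∈ Icc a b) :
    upperDeriv a b f s ≤ 0 := by
  rw [upperDeriv_eq_limsup_slope]
  refine limsup_le_of_le (by isBoundedDefault) ?_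
  filter_upwards [eventually_mem_nhdsWithin] with t ht
  exact EReal.coe_nonpos.2 (hf.slope_nonpos hs ht.1)

lemma nhdsWithin_Icc_diff_singleton_neBot (hab : a < b) {s : ℝ} (hs : s ∈ Icc a b) :
    (𝓝[Icc a b \ {s}] s).NeBot := by
  rcases hs.2.lt_or_eq with hsb | rfl
  · exact (left_nhdsWithin_Ioo_neBot hsb).mono
      (nhdsWithin_mono _ fun t ht => ⟨Ioo_subset_Icc_self ⟨hs.1.trans_lt ht.1, ht.2⟩, ht.1.ne'⟩)
  · exact (right_nhdsWithin_Ioo_neBot hab).mono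
      (nhdsWithin_mono _ fun t ht => ⟨Ioo_subset_Icc_self ht, ht.2.ne⟩)

lemma upperDeriv_eq_of_hasDerivAt (hab : a < b) {s d : ℝ} (hs : s ∈ Icc a b)
    (hf : HasDerivAt f d s) : upperDeriv a b f s = d := by
  have := nhdsWithin_Icc_diff_singleton_neBot hab hs
  rw [upperDeriv_eq_limsup_slope]
  exact ((continuous_coe_real_ereal.tendsto d).comp
    (hf.tendsto_slope.mono_left (nhdsWithin_mono _ fun t ht => ht.2))).limsup_eq

lemma ContinuousAt.le_biSup_inter_dense {X β : Type*} [TopologicalSpace X] [CompleteLattice β]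
    [TopologicalSpace β] [ClosedIicTopology β] {u : X → β} {U D : Set X} {t : X}
    (hU : IsOpen U) (hD : Dense D) (ht : t ∈ U) (hu : ContinuousAt u t) :
    u t ≤ ⨆ d ∈ U ∩ D, u d := by
  rw [← sSup_image]
  exact closure_minimal (fun _ => le_sSup) isClosed_Iic
    (mem_closure_image hu (hD.open_subset_closure_inter hU ht))

lemma biSup_slope_eq_biSup_inter {F : ℝ → ℝ} {T : Set ℝ}
    (hT : {x | ¬ContinuousAt F x} ∪ range ((↑) : ℚ → ℝ) ∪ {a, b} ⊆ T) (s r : ℝ) :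
    ⨆ t ∈ ball s r ∩ (Icc a b \ {s}), (slope F s t : EReal) =
      ⨆ t ∈ T ∩ (ball s r ∩ (Icc a b \ {s})), (slope F s t : EReal) := by
  refine le_antisymm (iSup₂_le fun t ht => ?_) (biSup_mono fun _ => And.right)
  by_cases htT : t ∈ T
  · exact le_iSup₂ (f := fun t _ => (slope F s t : EReal)) t ⟨htT, ht⟩
  have hFt : ContinuousAt F t := not_not.1 fun h => htT (hT (Or.inl (Or.inl h)))
  have hta : a ≠ t := fun h => htT (hT (Or.inr (h ▸ Or.inl rfl)))
  have htb : t ≠ b := fun h => htT (hT (Or.inr (h ▸ Or.inr rfl)))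
  have hU : IsOpen (ball s r ∩ (Ioo a b \ {s})) :=
    isOpen_ball.inter (isOpen_Ioo.sdiff isClosed_singleton)
  have htU : t ∈ ball s r ∩ (Ioo a b \ {s}) :=
    ⟨ht.1, ⟨ht.2.1.1.lt_of_ne hta, ht.2.1.2.lt_of_ne htb⟩, ht.2.2⟩
  have hslope : ContinuousAt (fun t => (slope F s t : EReal)) t := by
    refine continuous_coe_real_ereal.continuousAt.comp ?_
    rw [funext (slope_def_field F s)]
    exact (hFt.sub continuousAt_const).div (continuousAt_id.sub continuousAt_const)
      (sub_ne_zero.2 ht.2.2)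
  calc (slope F s t : EReal)
      ≤ ⨆ d ∈ ball s r ∩ (Ioo a b \ {s}) ∩ range ((↑) : ℚ → ℝ), (slope F s d : EReal) :=
        hslope.le_biSup_inter_dense hU Rat.denseRange_cast htU
    _ ≤ _ := biSup_mono fun d hd =>
        ⟨hT (Or.inl (Or.inr hd.2)), hd.1.1, Ioo_subset_Icc_self hd.1.2.1, hd.1.2.2⟩

lemma measurable_biSup_inter_slope {F : ℝ → ℝ} (hF : Measurable F) {T : Set ℝ}
    (hT : T.Countable) (r : ℝ) :
    Measurable fun s => ⨆ t ∈ T ∩ (ball s r ∩ (Icc a b \ {s})), (slope F s t : EReal) := by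
  classical
  have := hT.to_subtype
  have hsub : ∀ s, ⨆ t ∈ T ∩ (ball s r ∩ (Icc a b \ {s})), (slope F s t : EReal) =
      ⨆ t : T, ⨆ (_ : (t : ℝ) ∈ ball s r ∩ (Icc a b \ {s})), (slope F s t : EReal) := by
    simp only [iSup_subtype, mem_inter_iff, iSup_and, implies_true]
  rw [funext hsub]
  simp only [iSup_eq_if]
  refine Measurable.iSup fun t => Measurable.ite ?_ ?_ measurable_const
  · simp only [mem_inter_iff, mem_ball, Set.mem_sdiff, mem_singleton_iff, ofPred_and]
    exact (measurableSet_lt (by fun_prop) measurable_const).inter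
      (MeasurableSet.const _ |>.inter (measurableSet_eq_fun measurable_const measurable_id).compl)
  · simp only [slope_def_field]
    fun_prop

theorem measurable_upperDeriv {F : ℝ → ℝ} (hF : Measurable F)
    (hc : {x | ¬ContinuousAt F x}.Countable) : Measurable (upperDeriv a b F) := by
  set T := {x | ¬ContinuousAt F x} ∪ range ((↑) : ℚ → ℝ) ∪ {a, b}
  have hT : T.Countable := (hc.union (countable_range _)).union (toFinite _).countable
  have key : upperDeriv a b F = fun s =>
      ⨅ n : ℕ, ⨆ t ∈ T ∩ (ball s (1 / (n + 1)) ∩ (Icc a b \ {s})), (slope F s t : EReal) := by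
    ext s
    rw [upperDeriv_eq_limsup_slope, nhdsWithin,
      (nhds_basis_ball_inv_nat_succ.inf_principal _).limsup_eq_iInf_iSup]
    simp only [biSup_slope_eq_biSup_inter (T := T) subset_rfl, iInf_pos]
  rw [key]
  exact Measurable.iInf fun n => measurable_biSup_inter_slope hF hT _

lemma MonotoneOn.lintegral_ofReal_deriv_le (hab : a ≤ b) (hf : MonotoneOn f (Icc a b)) :
    ∫⁻ s in Icc a b, ENNReal.ofReal (deriv f s) ≤ ENNReal.ofReal (f b - f a) := by
  have hf' : MonotoneOn f (uIcc a b) := by rwa [uIcc_of_le hab]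
  have hint : IntegrableOn (deriv f) (Icc a b) :=
    (intervalIntegrable_iff_integrableOn_Icc_of_le hab).1 hf'.intervalIntegrable_deriv
  have hnonneg : 0 ≤ᵐ[volume.restrict (Icc a b)] deriv f := by
    rw [← restrict_Ioo_eq_restrict_Icc]
    filter_upwards [ae_restrict_mem measurableSet_Ioo] with x hx
    rw [← derivWithin_of_mem_nhds (Icc_mem_nhds hx.1 hx.2)]
    exact hf.derivWithin_nonneg
  have hfab : f a ≤ f b := hf ⟨le_rfl, hab⟩ ⟨hab, le_rfl⟩ hab
  have hmem := hf'.intervalIntegral_deriv_mem_uIcc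
  rw [uIcc_of_le (sub_nonneg.2 hfab), intervalIntegral.integral_of_le hab,
    ← integral_Icc_eq_integral_Ioc] at hmem
  rw [← ofReal_integral_eq_lintegral_ofReal hint hnonneg]
  exact ENNReal.ofReal_le_ofReal hmem.2

lemma Antitone.lintegral_toENNReal_neg_upperDeriv_le {F : ℝ → ℝ} (hab : a < b)
    (hF : Antitone F) :
    ∫⁻ s in Icc a b, (-upperDeriv a b F s).toENNReal ≤ ENNReal.ofReal (F a - F b) := by
  have hae : ∀ᵐ s ∂volume.restrict (Icc a b),
      (-upperDeriv a b F s).toENNReal = ENNReal.ofReal (deriv (fun x => -F x) s) := by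
    filter_upwards [ae_restrict_mem measurableSet_Icc,
      ae_restrict_of_ae hF.neg.ae_differentiableAt] with s hs hd
    have hFd : DifferentiableAt ℝ F s := by simpa using hd.neg
    rw [upperDeriv_eq_of_hasDerivAt hab hs hFd.hasDerivAt, deriv.fun_neg, ← EReal.coe_neg,
      EReal.real_coe_toENNReal]
  calc ∫⁻ s in Icc a b, (-upperDeriv a b F s).toENNReal
      = ∫⁻ s in Icc a b, ENNReal.ofReal (deriv (fun x => -F x) s) := lintegral_congr_ae hae
    _ ≤ ENNReal.ofReal (-F b - -F a) := (hF.neg.monotoneOn _).lintegral_ofReal_deriv_le hab.le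
    _ = ENNReal.ofReal (F a - F b) := by rw [neg_sub_neg]

/-- For a monotone non-increasing `f : [a,b] → ℝ`, the upper derivative `g` is
measurable and non-positive, hence integrable as an extended-real-valued
non-positive function, and `∫_a^b g(s) ds ≥ f(b) − f(a)` (the integral of `g`
being minus the `ℝ≥0∞`-valued integral of `−g`). -/
theorem antitone_upper_derivative_integral_bound
    (a b : ℝ) (hab : a < b) (f : ℝ → ℝ)
    (hmono : AntitoneOn f (Set.Icc a b)) :
    Measurable (fun s => erealToENNReal (-(upperDeriv a b f s))) ∧
    (∀ s ∈ Set.Icc a b, upperDeriv a b f s ≤ 0) ∧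
    ((f b - f a : ℝ) : EReal) ≤
      -((∫⁻ s in Set.Icc a b, erealToENNReal (-(upperDeriv a b f s))) : ENNReal) := by
  set F := IccExtend hab.le (fun x : Icc a b => f x)
  have hF : Antitone F := fun x y hxy =>
    hmono (projIcc a b hab.le x).2 (projIcc a b hab.le y).2 (monotone_projIcc hab.le hxy)
  have hFf : EqOn F f (Icc a b) := fun s hs => IccExtend_of_mem hab.le _ hs
  have hfab : f b ≤ f a := hmono ⟨le_rfl, hab.le⟩ ⟨hab.le, le_rfl⟩ hab.le
  rw [erealToENNReal_eq_toENNReal, ← upperDeriv_congr hFf]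
  refine ⟨(measurable_upperDeriv hF.measurable hF.countable_not_continuousAt).neg.ereal_toENNReal,
    fun s hs => upperDeriv_nonpos (hF.antitoneOn _) hs, ?_⟩
  have hI := hF.lintegral_toENNReal_neg_upperDeriv_le hab
  rw [hFf ⟨le_rfl, hab.le⟩, hFf ⟨hab.le, le_rfl⟩] at hI
  calc ((f b - f a : ℝ) : EReal) = -((ENNReal.ofReal (f a - f b) : ENNReal) : EReal) := by
        rw [EReal.coe_ennreal_ofReal, max_eq_left (sub_nonneg.2 hfab), ← EReal.coe_neg, neg_sub]
    _ ≤ _ := EReal.neg_le_neg_iff.2 (EReal.coe_ennreal_le_coe_ennreal_iff.2 hI)
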